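/- arXiv:0909.2194 — 3 statements merged into one kernel-verified Lean document; each statement's English description precedes it below -/
import Mathlib

section
/- Under the same linear rank distortion hypothesis, for all x,y,z ∈ S the inequality r_x(y) ≤ γ·(r_x(z) + r_y(z)) holds. -/
/-- Linear rank distortion implies the second approximate triangle inequality:
`r_x(y) ≤ γ (r_x(z) + r_y(z))`. -/
theorem stmt_1 {α : Type*} [Fintype α] (r : α → α → ℕ) (c γ : ℝ)
    (hc : 0 < c) (hγ : 0 < γ)
    (hlow : ∀ u v : α, c * (r u v : ℝ) ≤ ∑ j : α, |(r j v : ℝ) - (r j u : ℝ)|)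
    (hup : ∀ u v : α, ∑ j : α, |(r j v : ℝ) - (r j u : ℝ)| ≤ γ * (c * (r u v : ℝ))) :
    ∀ x y z : α, (r x y : ℝ) ≤ γ * ((r x z : ℝ) + (r y z : ℝ)) := by
  intro x y z
  have h1 : c * (r x y : ℝ) ≤ ∑ j : α, |(r j y : ℝ) - (r j x : ℝ)| := hlow x y
  have h2 : ∑ j : α, |(r j y : ℝ) - (r j x : ℝ)| ≤
      (∑ j : α, |(r j y : ℝ) - (r j z : ℝ)|) + ∑ j : α, |(r j z : ℝ) - (r j x : ℝ)| := by
    rw [← Finset.sum_add_distrib]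
    apply Finset.sum_le_sum
    intro j _
    have := abs_sub_abs_le_abs_sub ((r j y : ℝ) - (r j z : ℝ)) 0
    calc |(r j y : ℝ) - (r j x : ℝ)|
        = |((r j y : ℝ) - (r j z : ℝ)) + ((r j z : ℝ) - (r j x : ℝ))| := by ring_nf
      _ ≤ _ := abs_add_le _ _
  have h3 : ∑ j : α, |(r j y : ℝ) - (r j z : ℝ)| ≤ γ * (c * (r y z : ℝ)) := by
    have := hup y z
    simpa [abs_sub_comm] using this
  have h4 : ∑ j : α, |(r j z : ℝ) - (r j x : ℝ)| ≤ γ * (c * (r x z : ℝ)) := hup x z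
  have : c * (r x y : ℝ) ≤ γ * (c * (r x z : ℝ)) + γ * (c * (r y z : ℝ)) := by linarith
  have hfin : c * (r x y : ℝ) ≤ c * (γ * ((r x z : ℝ) + (r y z : ℝ))) := by ring_nf; linarith
  exact le_of_mul_le_mul_left hfin hc
end

section
/- Let h be the random hash function defined by choosing x₁, x₂ independently and uniformly at random from a set T of n objects and setting h(u) = 0 if r_{x₁}(u) ≤ r_{x₁}(x₂) and h(u) = 1 otherwise. Then for any two objects u, q, the probability that h(u) ≠ h(q) equals (1/n²)·Σ_{i∈T} |r_i(u) − r_i(q)| = (1/n²)·‖ρ_u − ρ_q‖₁. -/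
lemma range_eq_image {α : Type*} [Fintype α] [DecidableEq α] (n : ℕ)
    (hcard : Fintype.card α = n) (f : α → ℕ) (hinj : Function.Injective f)
    (hlt : ∀ v : α, f v < n) :
    (Finset.univ.image f) = Finset.range n := by
  apply Finset.eq_of_subset_of_card_le
  · intro k hk
    simp only [Finset.mem_image] at hk
    obtain ⟨x, _, rfl⟩ := hk
    exact Finset.mem_range.2 (hlt x)
  · rw [Finset.card_range, Finset.card_image_of_injective _ hinj, Finset.card_univ, hcard]

lemma key_count {α : Type*} [Fintype α] [DecidableEq α] (n : ℕ)
    (hcard : Fintype.card α = n) (f : α → ℕ) (hinj : Function.Injective f)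
    (hlt : ∀ v : α, f v < n) (a b : ℕ) (ha : a < n) (hb : b < n) :
    ((Finset.univ.filter fun x : α => ¬(a ≤ f x ↔ b ≤ f x)).card : ℝ)
      = |(a : ℝ) - (b : ℝ)| := by
  have h1 : (Finset.univ.filter fun x : α => ¬(a ≤ f x ↔ b ≤ f x)).card
      = ((Finset.univ.image f).filter fun k => ¬(a ≤ k ↔ b ≤ k)).card := by
    rw [Finset.filter_image, Finset.card_image_of_injective _ hinj]
  rw [h1, range_eq_image n hcard f hinj hlt]
  have h2 : ((Finset.range n).filter fun k => ¬(a ≤ k ↔ b ≤ k))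
      = Finset.Ico (min a b) (max a b) := by
    ext k
    simp only [Finset.mem_filter, Finset.mem_range, Finset.mem_Ico, le_min_iff,
      min_le_iff, lt_max_iff, max_lt_iff]
    constructor
    · intro ⟨hk, hiff⟩; omega
    · intro h
      constructor
      · omega
      · intro hiff; omega
  rw [h2, Nat.card_Ico]
  rcases le_total a b with h | h
  · rw [min_eq_left h, max_eq_right h, abs_sub_comm, abs_of_nonneg (sub_nonneg.2 (Nat.cast_le.2 h))]
    push_cast [h]; ring
  · rw [min_eq_right h, max_eq_left h, abs_of_nonneg (sub_nonneg.2 (Nat.cast_le.2 h))]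
    push_cast [h]; ring

/-- Rank-ball hashing: picking pivots `(x₁, x₂)` uniformly at random from the `n` objects and
setting `h(u) = 0` iff `r_{x₁}(u) ≤ r_{x₁}(x₂)`, the probability that `u` and `q` get
different hash values equals `(1/n²) Σ_i |r_i(u) − r_i(q)| = ‖ρ_u − ρ_q‖₁ / n²`. -/
theorem stmt_11 {α : Type*} [Fintype α] [DecidableEq α] (n : ℕ)
    (hcard : Fintype.card α = n) (hn : 0 < n)
    (r : α → α → ℕ) (hinj : ∀ i : α, Function.Injective (r i))
    (hlt : ∀ i v : α, r i v < n) (u q : α) :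
    (((Finset.univ ×ˢ Finset.univ).filter fun p : α × α =>
        ¬((r p.1 u ≤ r p.1 p.2) ↔ (r p.1 q ≤ r p.1 p.2))).card : ℝ) / (n ^ 2 : ℝ)
      = (1 / (n ^ 2 : ℝ)) * ∑ i : α, |(r i u : ℝ) - (r i q : ℝ)| := by
  have hsum : (((Finset.univ ×ˢ Finset.univ).filter fun p : α × α =>
        ¬((r p.1 u ≤ r p.1 p.2) ↔ (r p.1 q ≤ r p.1 p.2))).card : ℝ)
      = ∑ i : α, |(r i u : ℝ) - (r i q : ℝ)| := by
    rw [Finset.card_filter]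
    rw [Finset.sum_product]
    push_cast
    refine Finset.sum_congr rfl fun i _ => ?_
    rw [← key_count n hcard (r i) (hinj i) (hlt i) (r i u) (r i q) (hlt i u) (hlt i q)]
    rw [Finset.card_filter]
    push_cast
    rfl
  rw [hsum]; ring
end

section
/- For an (r, R, p, P)-sensitive hash family with 0 < P < p < 1, the exponent θ = log(1/p)/log(p/P) satisfies: if 1 − p = f(r)/n² and 1 − P = f(R)/(n²γ) with f linear (f(x) = cx), R = (1+ε)r, and f(r)/n² small, then θ ≤ 1/((1+ε)/γ − 1), provided (1+ε)/γ > 1. -/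
/-- LSH exponent bound for rank-sensitive hashing with linear rank distortion: with
`p = 1 − cr/n²` and `P = 1 − c(1+ε)r/(γn²)` (so `0 < P < p < 1`), and `(1+ε)/γ > 1`,
the exponent `θ = log(1/p)/log(p/P)` satisfies `θ ≤ 1/((1+ε)/γ − 1)`. -/
theorem stmt_15 (n γ ε c r p P : ℝ) (hn : 0 < n) (hγ : 0 < γ) (hε : 0 < ε)
    (hc : 0 < c) (hr : 0 < r)
    (hp : p = 1 - c * r / n ^ 2)
    (hP : P = 1 - c * (1 + ε) * r / (γ * n ^ 2))
    (hP0 : 0 < P) (hPp : P < p) (hp1 : p < 1)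
    (hsmall : c * r / n ^ 2 ≤ 1 / 2)
    (hgam : 1 < (1 + ε) / γ) :
    Real.log (1 / p) / Real.log (p / P) ≤ 1 / ((1 + ε) / γ - 1) := by
  set k : ℝ := (1 + ε) / γ with hk
  set x : ℝ := c * r / n ^ 2 with hx
  have hp0 : 0 < p := hP0.trans hPp
  -- P = 1 - k * x
  have hPkx : P = 1 - k * x := by
    rw [hP, hk, hx]
    field_simp
  -- Bernoulli: 1 - k*x ≤ (1 - x)^k
  have hbern : P ≤ p ^ k := by
    have := one_add_mul_self_le_rpow_one_add (s := -x) (p := k)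
      (by nlinarith) (le_of_lt hgam)
    rw [hPkx, hp]
    calc 1 - k * x = 1 + k * (-x) := by ring
      _ ≤ (1 + -x) ^ k := this
      _ = (1 - x) ^ k := by ring_nf
  -- take logs
  have hlog : Real.log P ≤ k * Real.log p := by
    calc Real.log P ≤ Real.log (p ^ k) := Real.log_le_log hP0 hbern
      _ = k * Real.log p := Real.log_rpow hp0 k
  have hden : 0 < Real.log (p / P) := by
    rw [Real.log_div hp0.ne' hP0.ne']
    have := Real.log_lt_log hP0 hPp
    linarith
  have hnum : Real.log (1 / p) = -Real.log p := by
    rw [one_div, Real.log_inv]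
  have hk1 : 0 < k - 1 := by linarith
  rw [hnum, div_le_div_iff₀ hden hk1, Real.log_div hp0.ne' hP0.ne']
  have hlp : Real.log p < 0 := Real.log_neg hp0 hp1
  nlinarith [hlog]
end
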